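/- Ray-splitting bound: fix a group H and m finite rays in H, each of the form R_k = { p_k · s_k^i | 0 ≤ i ≤ n_k − 1 } where each period s_k has infinite order and any two commensurable periods are equal. For a fixed ray R with index set [0, n−1], partition [0, n−1] into maximal consecutive intervals on which the set of other rays containing the point p·s^i is constant. Then the number of intervals in this partition is at most 2m − 1. -/
import Mathlib

lemma stmt11_auxg {H : Type*} [Group H] (a b x y : H) :
    a * x = b * y ↔ b⁻¹ * a = y * x⁻¹ := by
  constructor <;> intro h
  · have h2 : b⁻¹ * (a * x) * x⁻¹ = b⁻¹ * (b * y) * x⁻¹ := by rw [h]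
    calc b⁻¹ * a = b⁻¹ * (a * x) * x⁻¹ := by group
    _ = b⁻¹ * (b * y) * x⁻¹ := h2
    _ = y * x⁻¹ := by group
  · have h2 : b * (b⁻¹ * a) * x = b * (y * x⁻¹) * x := by rw [h]
    calc a * x = b * (b⁻¹ * a) * x := by group
    _ = b * (y * x⁻¹) * x := h2
    _ = b * y := by group

/-- Ray-splitting bound: splitting the distinguished ray `r` at the maximal
intervals on which the set of other rays through the current point is constant
yields at most `2m - 1` intervals (the number of boundaries is at most `2m - 2`). -/
theorem stmt11 {H : Type*} [Group H] (m : ℕ) (p s : Fin m → H) (n : Fin m → ℕ)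
    (hinf : ∀ k, ∀ z : ℤ, s k ^ z = 1 → z = 0)
    (hcomm : ∀ k l : Fin m,
      (∃ a b : ℤ, a ≠ 0 ∧ b ≠ 0 ∧ s k ^ a = s l ^ b) → s k = s l)
    (r : Fin m) (f : ℕ → Set (Fin m))
    (hf : ∀ i, f i = {k : Fin m | ∃ j < n k, p r * s r ^ i = p k * s k ^ j}) :
    {i : ℕ | i + 1 < n r ∧ f i ≠ f (i + 1)}.ncard + 1 ≤ 2 * m - 1 := by
  classical
  have hm : 0 < m := r.pos
  -- uniqueness of exponents
  have huniq : ∀ (k : Fin m) (d e : ℤ), s k ^ d = s k ^ e → d = e := by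
    intro k d e h
    have h0 : s k ^ (d - e) = 1 := by
      rw [zpow_sub, h]
      simp
    have := hinf k (d - e) h0
    omega
  -- membership characterization
  have hmem : ∀ (k : Fin m) (i : ℕ), k ∈ f i ↔
      ∃ j, j < n k ∧ (p k)⁻¹ * p r = s k ^ (j : ℤ) * (s r ^ (i : ℤ))⁻¹ := by
    intro k i
    rw [hf]
    simp only [Set.mem_setOf_eq]
    constructor
    · rintro ⟨j, hj, hE⟩
      refine ⟨j, hj, ?_⟩
      rw [zpow_natCast, zpow_natCast]
      exact (stmt11_auxg _ _ _ _).mp hE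
    · rintro ⟨j, hj, hE⟩
      refine ⟨j, hj, ?_⟩
      rw [zpow_natCast, zpow_natCast] at hE
      exact (stmt11_auxg _ _ _ _).mpr hE
  -- key: each ray contributes at most two boundaries
  have key : ∀ k : Fin m, ∃ A : Finset ℕ, A.card ≤ 2 ∧
      ∀ i, ¬(k ∈ f i ↔ k ∈ f (i + 1)) → i ∈ A := by
    intro k
    by_cases hpar : s k = s r
    · -- parallel case
      by_cases hd : ∃ d : ℤ, (p k)⁻¹ * p r = s r ^ d
      · obtain ⟨d, hdeq⟩ := hd
        have hmem2 : ∀ i : ℕ, k ∈ f i ↔ (0 ≤ (i : ℤ) + d ∧ (i : ℤ) + d < (n k : ℤ)) := by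
          intro i
          rw [hmem k i, hpar]
          constructor
          · rintro ⟨j, hj, hE⟩
            rw [hdeq] at hE
            have : d = (j : ℤ) - i := by
              apply huniq r
              rw [hE, ← zpow_sub]
            omega
          · rintro ⟨h0, h1⟩
            refine ⟨((i : ℤ) + d).toNat, by omega, ?_⟩
            rw [hdeq, ← zpow_sub]
            congr 1
            omega
        refine ⟨{(-1 - d).toNat, ((n k : ℤ) - 1 - d).toNat}, Finset.card_le_two, ?_⟩
        intro i hi
        rw [hmem2 i, hmem2 (i + 1)] at hi
        simp only [Finset.mem_insert, Finset.mem_singleton]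
        push_cast at hi
        omega
      · -- no solution at all: k is never on the ray
        refine ⟨∅, by simp, ?_⟩
        intro i hi
        exfalso
        have hnone : ∀ i : ℕ, k ∉ f i := by
          intro i hki
          obtain ⟨j, hj, hE⟩ := (hmem k i).mp hki
          refine hd ⟨(j : ℤ) - i, ?_⟩
          simp [hE, hpar, zpow_sub, div_eq_mul_inv]
        exact hi ⟨fun h => absurd h (hnone i), fun h => absurd h (hnone (i + 1))⟩
    · -- non-parallel case: k meets r in at most one point
      have huni : ∀ i i' : ℕ, k ∈ f i → k ∈ f i' → i = i' := by
        intro i i' h1 h2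
        obtain ⟨j, hj, hE1⟩ := (hmem k i).mp h1
        obtain ⟨j', hj', hE2⟩ := (hmem k i').mp h2
        by_contra hne
        have hE : s k ^ (j : ℤ) * (s r ^ (i : ℤ))⁻¹ = s k ^ (j' : ℤ) * (s r ^ (i' : ℤ))⁻¹ := by
          rw [← hE1, ← hE2]
        have hE3 : s k ^ ((j : ℤ) - j') = s r ^ ((i : ℤ) - i') := by
          have h4 : s k ^ (-(j' : ℤ)) * (s k ^ (j : ℤ) * (s r ^ (i : ℤ))⁻¹) * s r ^ (i : ℤ)
              = s k ^ (-(j' : ℤ)) * (s k ^ (j' : ℤ) * (s r ^ (i' : ℤ))⁻¹) * s r ^ (i : ℤ) := by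
            rw [hE]
          calc s k ^ ((j : ℤ) - j')
              = s k ^ (-(j' : ℤ)) * (s k ^ (j : ℤ) * (s r ^ (i : ℤ))⁻¹) * s r ^ (i : ℤ) := by
                group
            _ = s k ^ (-(j' : ℤ)) * (s k ^ (j' : ℤ) * (s r ^ (i' : ℤ))⁻¹) * s r ^ (i : ℤ) := h4
            _ = s r ^ ((i : ℤ) - i') := by
                group
        have hjne : (j : ℤ) - j' ≠ 0 := by
          intro h0
          rw [h0, zpow_zero] at hE3
          have := hinf r ((i : ℤ) - i') hE3.symm
          omega
        exact hpar (hcomm k r ⟨(j : ℤ) - j', (i : ℤ) - i', hjne, by omega, hE3⟩)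
      by_cases hex : ∃ i0, k ∈ f i0
      · obtain ⟨i0, hi0⟩ := hex
        refine ⟨{i0, i0 - 1}, Finset.card_le_two, ?_⟩
        intro i hi
        simp only [Finset.mem_insert, Finset.mem_singleton]
        by_cases h1 : k ∈ f i
        · left; exact huni i i0 h1 hi0
        · have h2 : k ∈ f (i + 1) := by tauto
          have := huni (i + 1) i0 h2 hi0
          right; omega
      · push_neg at hex
        refine ⟨∅, by simp, ?_⟩
        intro i hi
        exact absurd ⟨fun h => absurd h (hex i), fun h => absurd h (hex (i + 1))⟩ hi
  choose A hA1 hA2 using key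
  set S := {i : ℕ | i + 1 < n r ∧ f i ≠ f (i + 1)} with hSdef
  have hS : S ⊆ ↑((Finset.univ.erase r).biUnion A) := by
    intro i hi
    obtain ⟨hlt, hne⟩ := hi
    obtain ⟨k, hk⟩ := not_forall.mp (fun h => hne (Set.ext h))
    have hri : ∀ j : ℕ, j < n r → r ∈ f j := by
      intro j hj
      rw [hf]
      exact ⟨j, hj, rfl⟩
    have hkr : k ≠ r := by
      intro hkr
      apply hk
      rw [hkr]
      exact ⟨fun _ => hri (i + 1) hlt, fun _ => hri i (by omega)⟩
    exact Finset.mem_coe.mpr (Finset.mem_biUnion.mpr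
      ⟨k, Finset.mem_erase.mpr ⟨hkr, Finset.mem_univ k⟩, hA2 k i hk⟩)
  have h1 : S.ncard ≤ ((Finset.univ.erase r).biUnion A).card := by
    rw [← Set.ncard_coe_finset]
    exact Set.ncard_le_ncard hS (Finset.finite_toSet _)
  have h2 : ((Finset.univ.erase r).biUnion A).card ≤ ∑ k ∈ Finset.univ.erase r, (A k).card :=
    Finset.card_biUnion_le
  have h3 : ∑ k ∈ Finset.univ.erase r, (A k).card ≤ (Finset.univ.erase r).card * 2 := by
    calc ∑ k ∈ Finset.univ.erase r, (A k).card ≤ ∑ _k ∈ Finset.univ.erase r, 2 :=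
      Finset.sum_le_sum fun k _ => hA1 k
    _ = (Finset.univ.erase r).card * 2 := by rw [Finset.sum_const, smul_eq_mul]
  have h4 : (Finset.univ.erase r).card = m - 1 := by
    rw [Finset.card_erase_of_mem (Finset.mem_univ r), Finset.card_univ, Fintype.card_fin]
  omega
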